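/- In the power series ring ℤ[[q]], the element φ_q := (q^2 + q − 1 + s)/(2q) where s is the unique square root of (q^2+3q+1)(q^2−q+1) in ℤ[[q]] with constant term 1, has Taylor expansion beginning 1 + q^2 − q^3 + 2q^4 − 4q^5 + 8q^6 − 17q^7 + ... ; in particular its coefficients of q^0 through q^7 are 1, 0, 1, −1, 2, −4, 8, −17. -/

import Mathlib

/-!
Substituting `s = 2Xφ - (X² + X - 1)` into `s² = (X² + 3X + 1)(X² - X + 1)` and cancelling `4X`
leaves the functional equation `φ = 1 + X((1 + X)φ - φ²)`. Comparing coefficients gives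
`φ₀ = 1`, `φ₁ = 0` and `φ_{n+2} = φ_{n+1} + φ_n - ∑_{i+j=n+1} φ_i φ_j`, from which the listed
coefficients are computed one after another.
-/

open PowerSeries

theorem eq_one_add_X_mul_of_two_mul_X_mul_eq {R : Type*} [CommRing R] [IsDomain R] [CharZero R]
    {s φ : R⟦X⟧} (hs : s ^ 2 = (X ^ 2 + 3 * X + 1) * (X ^ 2 - X + 1))
    (hφ : 2 * X * φ = X ^ 2 + X - 1 + s) :
    φ = 1 + X * ((1 + X) * φ - φ ^ 2) := by
  have h : (4 * X : R⟦X⟧) * (1 + X * ((1 + X) * φ - φ ^ 2) - φ) = 0 := by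
    linear_combination -(2 * X * φ - (X ^ 2 + X - 1) + s) * hφ - hs
  have h4 : (4 : R⟦X⟧) ≠ 0 := by
    rw [← map_ofNat C 4, Ne, map_eq_zero_iff C C_injective]
    norm_num
  exact (sub_eq_zero.mp ((mul_eq_zero.mp h).resolve_left (mul_ne_zero h4 X_ne_zero))).symm

theorem coeff_of_eq_one_add_X_mul {R : Type*} [CommRing R] {φ : R⟦X⟧}
    (h : φ = 1 + X * ((1 + X) * φ - φ ^ 2)) :
    coeff 0 φ = 1 ∧ coeff 1 φ = 0 ∧ ∀ n, coeff (n + 2) φ =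
      coeff (n + 1) φ + coeff n φ - ∑ i ∈ Finset.range (n + 2), coeff i φ * coeff (n + 1 - i) φ := by
  have hsucc : ∀ n, coeff (n + 1) φ = coeff n ((1 + X) * φ - φ ^ 2) := fun n => by
    conv_lhs => rw [h]
    rw [map_add, coeff_succ_X_mul, coeff_one, if_neg n.succ_ne_zero, zero_add]
  have h0 : constantCoeff φ = 1 := by
    conv_lhs => rw [h]
    simp
  refine ⟨(coeff_zero_eq_constantCoeff_apply φ).trans h0, ?_, fun n => ?_⟩
  · simp [hsucc, add_mul, h0]
  · rw [hsucc, map_sub, add_mul, one_mul, map_add, coeff_succ_X_mul, sq, coeff_mul,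
      Finset.Nat.sum_antidiagonal_eq_sum_range_succ (fun i j => coeff i φ * coeff j φ)]

theorem qGolden_taylor_coeffs_general (s φ : PowerSeries ℚ)
    (hs : s ^ 2 = (X ^ 2 + 3 * X + 1) * (X ^ 2 - X + 1))
    (hφ : 2 * X * φ = X ^ 2 + X - 1 + s) :
    coeff 0 φ = 1 ∧ coeff 1 φ = 0 ∧ coeff 2 φ = 1 ∧ coeff 3 φ = -1 ∧
    coeff 4 φ = 2 ∧ coeff 5 φ = -4 ∧ coeff 6 φ = 8 ∧ coeff 7 φ = -17 := by
  obtain ⟨h0, h1, hrec⟩ :=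
    coeff_of_eq_one_add_X_mul (eq_one_add_X_mul_of_two_mul_X_mul_eq hs hφ)
  refine ⟨h0, h1, ?_⟩
  norm_num [hrec, Finset.sum_range_succ, h0, h1]

theorem qGolden_taylor_coeffs (s φ : PowerSeries ℚ)
    (hs : s ^ 2 = (X ^ 2 + 3 * X + 1) * (X ^ 2 - X + 1))
    (hs0 : constantCoeff s = 1)
    (hφ : 2 * X * φ = X ^ 2 + X - 1 + s) :
    coeff 0 φ = 1 ∧ coeff 1 φ = 0 ∧ coeff 2 φ = 1 ∧ coeff 3 φ = -1 ∧
    coeff 4 φ = 2 ∧ coeff 5 φ = -4 ∧ coeff 6 φ = 8 ∧ coeff 7 φ = -17 :=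
  qGolden_taylor_coeffs_general s φ hs hφ
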